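/- arXiv:2305.03149 — 6 statements merged into one kernel-verified Lean document; each statement's English description precedes it below -/
import Mathlib

section
/- Let R0 = Π Θᵀ where Π is an N×K matrix with nonnegative entries and rows summing to 1, and Θ is a J×K matrix. Suppose Π contains the K×K identity matrix as a submatrix (after row permutation), i.e., there exist indices S = (S_1,...,S_K) with Π_{S,:} = I_K. If R0 = U Σ Vᵀ is a rank-K singular value decomposition with UᵀU = VᵀV = I_K and Σ invertible, then U = Π U_{S,:}. -/
/-!
Since `Vᵀ V = 1` and `Σ` is invertible, the SVD gives `U = R0 V Σ⁻¹ = Π (Θᵀ V Σ⁻¹)`, so every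
row of `U` is the corresponding row of `Π` applied to one fixed `K × K` matrix. The rows of `Π`
indexed by `S` form the identity, so that matrix is `U_{S,:}`.
-/

open Matrix

theorem Matrix.eq_mul_mul_inv_of_eq_mul_mul_transpose {R : Type*} [CommRing R]
    {m n k : Type*} [Fintype n] [Fintype k] [DecidableEq k]
    {A : Matrix m n R} {U : Matrix m k R} {D : Matrix k k R} {V : Matrix n k R}
    (hV : Vᵀ * V = 1) (hD : IsUnit D.det) (hA : A = U * D * Vᵀ) :
    U = A * V * D⁻¹ := by
  rw [hA, Matrix.mul_assoc (U * D), hV, Matrix.mul_one, Matrix.mul_assoc,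
    Matrix.mul_nonsing_inv _ hD, Matrix.mul_one]

theorem Matrix.mul_eq_mul_submatrix_mul {R : Type*} [Semiring R]
    {m n l : Type*} [Fintype n] [DecidableEq n]
    (P : Matrix m n R) (B : Matrix n l R) (S : n → m) (hS : P.submatrix S id = 1) :
    P * B = P * (P * B).submatrix S id := by
  rw [Matrix.submatrix_mul P B S id id Function.bijective_id, hS, Matrix.one_mul,
    Matrix.submatrix_id_id]

theorem stmt0_general {N J K : ℕ}
    (Pmat : Matrix (Fin N) (Fin K) ℝ) (Tmat : Matrix (Fin J) (Fin K) ℝ)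
    (U : Matrix (Fin N) (Fin K) ℝ) (V : Matrix (Fin J) (Fin K) ℝ)
    (Sig : Matrix (Fin K) (Fin K) ℝ)
    (S : Fin K → Fin N) (hS : Pmat.submatrix S id = 1)
    (hVo : Vᵀ * V = 1)
    (hSigInv : IsUnit Sig.det)
    (hSVD : Pmat * Tmatᵀ = U * Sig * Vᵀ) :
    U = Pmat * U.submatrix S id := by
  have hU : U = Pmat * (Tmatᵀ * V * Sig⁻¹) := by
    rw [eq_mul_mul_inv_of_eq_mul_mul_transpose hVo hSigInv hSVD, Matrix.mul_assoc,
      Matrix.mul_assoc, Matrix.mul_assoc]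
  rw [hU]
  exact mul_eq_mul_submatrix_mul Pmat _ S hS

/-- If `R0 = Pmat * Tmatᵀ` with `Pmat` row-stochastic nonnegative containing the
identity as a row submatrix (`Pmat.submatrix S id = 1`), and `R0 = U * Sig * Vᵀ` is a rank-K SVD
with orthonormal columns and invertible diagonal `Sig`, then `U = Pmat * U.submatrix S id`. -/
theorem stmt0 {N J K : ℕ}
    (Pmat : Matrix (Fin N) (Fin K) ℝ) (Tmat : Matrix (Fin J) (Fin K) ℝ)
    (U : Matrix (Fin N) (Fin K) ℝ) (V : Matrix (Fin J) (Fin K) ℝ)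
    (Sig : Matrix (Fin K) (Fin K) ℝ)
    (hnn : ∀ i k, 0 ≤ Pmat i k) (hrow : ∀ i, ∑ k, Pmat i k = 1)
    (S : Fin K → Fin N) (hS : Pmat.submatrix S id = 1)
    (hUo : Uᵀ * U = 1) (hVo : Vᵀ * V = 1)
    (hSigDiag : Sig.IsDiag) (hSigInv : IsUnit Sig.det)
    (hSVD : Pmat * Tmatᵀ = U * Sig * Vᵀ) :
    U = Pmat * U.submatrix S id :=
  stmt0_general Pmat Tmat U V Sig S hS hVo hSigInv hSVD
end

section
/- With M_ε defined as above, if ε ≤ 1/(K−1) and Π is row-stochastic with nonnegative entries satisfying π_{i1} ≤ 1 − δ for all i, and 0 < ε < δ, then every entry of Π M_ε is nonnegative. Moreover, for k ≥ 2, (Π M_ε)_{ik} ≥ ε δ² > 0. -/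
/-!
For a column `k ≠ 0` the entry `(Π M_ε)_{ik}` equals
`ε (1 - π_{i1} (1 + ε)) + π_{ik} (1 - (K-1) ε)`; the second summand is nonnegative because
`ε ≤ 1/(K-1)`, and `π_{i1} (1 + ε) ≤ (1 - δ)(1 + δ) = 1 - δ²` bounds the first one below by `ε δ²`.
Column `0` of `M_ε` is a nonnegative multiple of the first unit vector.
-/

open Matrix BigOperators

/-- The `K×K` matrix `M_ε` from the proof of Theorem 1. -/
noncomputable def Meps (K : ℕ) (ε : ℝ) : Matrix (Fin K) (Fin K) ℝ :=
  Matrix.of fun i j =>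
    if (i : ℕ) = 0 then
      (if (j : ℕ) = 0 then 1 + ((K : ℝ) - 1) * ε ^ 2 else -ε ^ 2)
    else
      if (j : ℕ) = 0 then 0
      else if i = j then ε + (1 - ((K : ℝ) - 1) * ε) else ε

section Meps

variable {K : ℕ} (hK : 0 < K) (ε : ℝ)
include hK

lemma Meps_apply_zero_right (j : Fin K) :
    Meps K ε j ⟨0, hK⟩ = if j = ⟨0, hK⟩ then 1 + ((K : ℝ) - 1) * ε ^ 2 else 0 := by
  simp [Meps, Fin.ext_iff]

lemma Meps_apply_of_ne_zero_right (j k : Fin K) (hk : (k : ℕ) ≠ 0) :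
    Meps K ε j k = ε - (if j = ⟨0, hK⟩ then ε + ε ^ 2 else 0)
      + (if j = k then 1 - ((K : ℝ) - 1) * ε else 0) := by
  by_cases hj : (j : ℕ) = 0
  · have hjk : j ≠ k := fun h => hk (h ▸ hj)
    simp [Meps, Fin.ext_iff, hj, hk, hjk]
  · by_cases hjk : j = k
    · subst hjk
      simp [Meps, Fin.ext_iff, hj]
    · simp [Meps, Fin.ext_iff, hj, hk, Fin.val_ne_of_ne hjk]

variable {N : ℕ} (P : Matrix (Fin N) (Fin K) ℝ)

lemma mul_Meps_apply_zero_right (i : Fin N) :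
    (P * Meps K ε) i ⟨0, hK⟩ = P i ⟨0, hK⟩ * (1 + ((K : ℝ) - 1) * ε ^ 2) := by
  simp only [mul_apply, Meps_apply_zero_right hK, mul_ite, mul_zero, Finset.sum_ite_eq',
    Finset.mem_univ, if_true]

lemma mul_Meps_apply_of_ne_zero_right (i : Fin N) (k : Fin K) (hk : (k : ℕ) ≠ 0) :
    (P * Meps K ε) i k = ε * ∑ j, P i j - P i ⟨0, hK⟩ * (ε + ε ^ 2)
      + P i k * (1 - ((K : ℝ) - 1) * ε) := by
  simp only [mul_apply, Meps_apply_of_ne_zero_right hK ε _ k hk, mul_add, mul_sub, mul_ite,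
    mul_zero, Finset.sum_add_distrib, Finset.sum_sub_distrib, Finset.sum_ite_eq',
    Finset.mem_univ, if_true]
  rw [← Finset.sum_mul]
  ring

end Meps

lemma mul_sq_le_mul_one_sub {p δ ε : ℝ} (hp : 0 ≤ p) (hpδ : p ≤ 1 - δ) (hε : 0 < ε)
    (hεδ : ε < δ) : ε * δ ^ 2 ≤ ε * (1 - p * (1 + ε)) := by
  have : p * (1 + ε) ≤ (1 - δ) * (1 + δ) :=
    mul_le_mul hpδ (by linarith) (by linarith) (by linarith)
  exact mul_le_mul_of_nonneg_left (by nlinarith) hε.le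

/-- If `ε ≤ 1/(K−1)`, `0 < ε < δ`, and `Pmat` is row-stochastic nonnegative with
`Pmat i 0 ≤ 1 − δ` for all `i`, then all entries of `Pmat * M_ε` are nonnegative; moreover
for columns `k ≥ 2` the entries are at least `ε δ² > 0`. -/
theorem stmt7 {N K : ℕ} (hK : 2 ≤ K)
    (Pmat : Matrix (Fin N) (Fin K) ℝ)
    (hPnn : ∀ i k, 0 ≤ Pmat i k) (hProw : ∀ i, ∑ k, Pmat i k = 1)
    (δ ε : ℝ) (hε : 0 < ε) (hεδ : ε < δ)
    (hεK : ε ≤ 1 / ((K : ℝ) - 1))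
    (hnopure : ∀ i, Pmat i ⟨0, by omega⟩ ≤ 1 - δ) :
    (∀ i k, 0 ≤ (Pmat * Meps K ε) i k) ∧
      (∀ i (k : Fin K), 1 ≤ (k : ℕ) → ε * δ ^ 2 ≤ (Pmat * Meps K ε) i k) ∧
      0 < ε * δ ^ 2 := by
  have hK1 : (1 : ℝ) ≤ (K : ℝ) - 1 := by
    have : (2 : ℝ) ≤ K := by exact_mod_cast hK
    linarith
  have hdiag : 0 ≤ 1 - ((K : ℝ) - 1) * ε := by
    rw [le_div_iff₀ (by linarith)] at hεK
    linarith
  have hpos : 0 < ε * δ ^ 2 := by have : 0 < δ := hε.trans hεδ; positivity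
  have hcol : ∀ i (k : Fin K), 1 ≤ (k : ℕ) → ε * δ ^ 2 ≤ (Pmat * Meps K ε) i k := by
    intro i k hk
    rw [mul_Meps_apply_of_ne_zero_right (by omega) ε Pmat i k (by omega), hProw]
    have := mul_sq_le_mul_one_sub (hPnn i _) (hnopure i) hε hεδ
    linarith [mul_nonneg (hPnn i k) hdiag]
  refine ⟨fun i k => ?_, hcol, hpos⟩
  rcases Nat.eq_zero_or_pos k with hk | hk
  · rw [show k = ⟨0, by omega⟩ from Fin.ext hk, mul_Meps_apply_zero_right]
    exact mul_nonneg (hPnn i _) (by positivity)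
  · exact hpos.le.trans (hcol i k hk)
end

section
/- (Identifiability under full rank) Suppose Π, Π̃ ∈ ℝ^{N×K} are row-stochastic with nonnegative entries, each containing I_K as a submatrix of rows (pure subject condition), and Θ, Θ̃ ∈ [0,1]^{J×K} with rank(Θ) = K. If Π Θᵀ = Π̃ Θ̃ᵀ, then there is a K×K permutation matrix P with Π̃ = Π P and Θ̃ = Θ P. -/
/-!
Evaluating `Π Θᵀ = Π̃ Θ̃ᵀ` at the pure subjects of `Π̃` gives `Θ̃ᵀ = A Θᵀ`, and at those of `Π`
gives `Θᵀ = B Θ̃ᵀ`, where `A`, `B` are row-stochastic `K × K` matrices (rows of `Π`, resp. `Π̃`).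
Since `Θ` has full column rank, `Θᵀ` can be cancelled on the right, so `B A = 1`. By
nonnegativity this makes `A` a permutation matrix: a nonzero entry `B k i` forces row `i` of `A`
to vanish off column `k`. Cancelling `Θᵀ` once more gives `Π = Π̃ A`.
-/

open Matrix

namespace Matrix

variable {l m n R : Type*}

section Rank

variable [Field R] [Fintype m] [Fintype n]

theorem linearIndependent_row_of_rank_eq_card {M : Matrix m n R}
    (hM : M.rank = Fintype.card m) : LinearIndependent R M.row := by
  rw [linearIndependent_iff_card_eq_finrank_span, ← hM, rank_eq_finrank_span_row]
  rfl

theorem mul_right_cancel_of_rank_eq_card {M : Matrix m n R} (hM : M.rank = Fintype.card m)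
    {X Y : Matrix l m R} (h : X * M = Y * M) : X = Y :=
  funext fun i => vecMul_injective_iff.mpr (linearIndependent_row_of_rank_eq_card hM) (congrFun h i)

end Rank

theorem exists_submatrix_eq_one_of_forall_exists_row [DecidableEq m] [Zero R] [One R]
    {P : Matrix l m R} (h : ∀ k, ∃ i, ∀ j, P i j = if j = k then 1 else 0) :
    ∃ ι : m → l, P.submatrix ι id = 1 := by
  choose ι hι using h
  exact ⟨ι, by ext k j; simp [hι, one_apply, eq_comm]⟩

theorem submatrix_mul_id [Fintype m] [Mul R] [AddCommMonoid R] (P : Matrix l m R)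
    (M : Matrix m n R) (ι : m → l) :
    (P * M).submatrix ι id = P.submatrix ι id * M :=
  submatrix_mul P M ι id id Function.bijective_id

theorem exists_perm_eq_permMatrix_of_forall_exists_row [Finite m] [DecidableEq m] [Zero R] [One R]
    [NeZero (1 : R)] {A : Matrix m m R} (h : ∀ k, ∃ i, A i = Pi.single k 1) :
    ∃ σ : Equiv.Perm m, A = σ.permMatrix R := by
  choose f hf using h
  have hf_inj : Function.Injective f := fun k k' hkk' => by
    have := congrFun ((hf k).symm.trans (hkk' ▸ hf k')) k
    by_contra hne
    simp [hne] at this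
  let e : Equiv.Perm m := Equiv.ofBijective f (Finite.injective_iff_bijective.mp hf_inj)
  refine ⟨e.symm, funext fun i => ?_⟩
  calc A i = A (f (e.symm i)) := by rw [show f (e.symm i) = i from e.apply_symm_apply i]
    _ = Equiv.Perm.permMatrix R e.symm i := (hf _).trans (PEquiv.toMatrix_toPEquiv_apply _ _).symm

section Stochastic

variable [Fintype n] [DecidableEq n] [Semiring R] [PartialOrder R] [IsOrderedRing R]

theorem submatrix_id_mem_rowStochastic {P : Matrix l n R} (hnn : ∀ i j, 0 ≤ P i j)
    (hrow : ∀ i, ∑ j, P i j = 1) (ι : n → l) : P.submatrix ι id ∈ rowStochastic R n :=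
  mem_rowStochastic_iff_sum.mpr ⟨fun _ _ => hnn _ _, fun _ => hrow _⟩

variable [NoZeroDivisors R] [Nontrivial R] {A B : Matrix n n R}

theorem exists_row_eq_single_of_mul_eq_one (hA : A ∈ rowStochastic R n)
    (hB : B ∈ rowStochastic R n) (hBA : B * A = 1) (k : n) : ∃ i, A i = Pi.single k 1 := by
  rw [mem_rowStochastic_iff_sum] at hA hB
  obtain ⟨i, -, hi⟩ := Finset.exists_ne_zero_of_sum_ne_zero (hB.2 k ▸ one_ne_zero)
  have hzero : ∀ j ≠ k, A i j = 0 := fun j hj => by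
    have hsum : ∑ l, B k l * A l j = 0 := by rw [← mul_apply, hBA, one_apply_ne hj.symm]
    have hterm := (Finset.sum_eq_zero_iff_of_nonneg fun l _ => mul_nonneg (hB.1 k l) (hA.1 l j)).mp
      hsum i (Finset.mem_univ i)
    exact (mul_eq_zero.mp hterm).resolve_left hi
  refine ⟨i, funext fun j => ?_⟩
  by_cases hj : j = k
  · subst hj
    rw [Pi.single_eq_same, ← hA.2 i, Finset.sum_eq_single j (fun l _ hl => hzero l hl) (by simp)]
  · rw [Pi.single_eq_of_ne hj, hzero j hj]

theorem exists_perm_eq_permMatrix_of_mul_eq_one (hA : A ∈ rowStochastic R n)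
    (hB : B ∈ rowStochastic R n) (hBA : B * A = 1) : ∃ σ : Equiv.Perm n, A = σ.permMatrix R :=
  exists_perm_eq_permMatrix_of_forall_exists_row (exists_row_eq_single_of_mul_eq_one hA hB hBA)

end Stochastic

end Matrix

theorem stmt9_general {N J K : ℕ}
    (Pmat P' : Matrix (Fin N) (Fin K) ℝ) (Tmat T' : Matrix (Fin J) (Fin K) ℝ)
    (hPnn : ∀ i k, 0 ≤ Pmat i k) (hProw : ∀ i, ∑ k, Pmat i k = 1)
    (hP'nn : ∀ i k, 0 ≤ P' i k) (hP'row : ∀ i, ∑ k, P' i k = 1)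
    (hPpure : ∀ k : Fin K, ∃ i, ∀ l, Pmat i l = if l = k then 1 else 0)
    (hP'pure : ∀ k : Fin K, ∃ i, ∀ l, P' i l = if l = k then 1 else 0)
    (hrkT : Tmat.rank = K)
    (heq : Pmat * Tmatᵀ = P' * T'ᵀ) :
    ∃ σ : Equiv.Perm (Fin K),
      P' = Pmat.submatrix id σ ∧ T' = Tmat.submatrix id σ := by
  obtain ⟨ι, hι⟩ := exists_submatrix_eq_one_of_forall_exists_row hPpure
  obtain ⟨ι', hι'⟩ := exists_submatrix_eq_one_of_forall_exists_row hP'pure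
  set A := Pmat.submatrix ι' id
  have hT'A : T'ᵀ = A * Tmatᵀ := by
    rw [← submatrix_mul_id, heq, submatrix_mul_id, hι', Matrix.one_mul]
  have hTB : Tmatᵀ = P'.submatrix ι id * T'ᵀ := by
    rw [← submatrix_mul_id, ← heq, submatrix_mul_id, hι, Matrix.one_mul]
  have hrk : Tmatᵀ.rank = Fintype.card (Fin K) := by rw [rank_transpose, hrkT, Fintype.card_fin]
  have hBA : P'.submatrix ι id * A = 1 :=
    mul_right_cancel_of_rank_eq_card hrk
      (by rw [Matrix.mul_assoc, ← hT'A, ← hTB, Matrix.one_mul])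
  obtain ⟨σ, hσ⟩ : ∃ σ : Equiv.Perm (Fin K), A = σ.permMatrix ℝ :=
    exists_perm_eq_permMatrix_of_mul_eq_one (submatrix_id_mem_rowStochastic hPnn hProw ι')
      (submatrix_id_mem_rowStochastic hP'nn hP'row ι) hBA
  have hPA : Pmat = P' * A :=
    mul_right_cancel_of_rank_eq_card hrk (by rw [Matrix.mul_assoc, ← hT'A, heq])
  refine ⟨σ, ?_, ?_⟩
  · rw [hPA, hσ, PEquiv.mul_toMatrix_toPEquiv, submatrix_submatrix,
      Function.comp_id, Equiv.symm_comp_self, submatrix_id_id]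
  · rw [← transpose_transpose T', hT'A, hσ, PEquiv.toMatrix_toPEquiv_mul, transpose_submatrix,
      transpose_transpose]

/-- Theorem 2(a): identifiability under full rank.
If `Pmat, P'` are row-stochastic nonnegative matrices each satisfying the pure subject condition,
`Tmat, T'` have entries in `[0,1]` with `rank Tmat = K`, and `Pmat * Tmatᵀ = P' * T'ᵀ`, then the
two parameter pairs agree up to a common permutation of the `K` columns. -/
theorem stmt9 {N J K : ℕ}
    (Pmat P' : Matrix (Fin N) (Fin K) ℝ) (Tmat T' : Matrix (Fin J) (Fin K) ℝ)
    (hPnn : ∀ i k, 0 ≤ Pmat i k) (hProw : ∀ i, ∑ k, Pmat i k = 1)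
    (hP'nn : ∀ i k, 0 ≤ P' i k) (hP'row : ∀ i, ∑ k, P' i k = 1)
    (hPpure : ∀ k : Fin K, ∃ i, ∀ l, Pmat i l = if l = k then 1 else 0)
    (hP'pure : ∀ k : Fin K, ∃ i, ∀ l, P' i l = if l = k then 1 else 0)
    (hT : ∀ j k, Tmat j k ∈ Set.Icc (0 : ℝ) 1)
    (hT' : ∀ j k, T' j k ∈ Set.Icc (0 : ℝ) 1)
    (hrkT : Tmat.rank = K)
    (heq : Pmat * Tmatᵀ = P' * T'ᵀ) :
    ∃ σ : Equiv.Perm (Fin K),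
      P' = Pmat.submatrix id σ ∧ T' = Tmat.submatrix id σ :=
  stmt9_general Pmat P' Tmat T' hPnn hProw hP'nn hP'row hPpure hP'pure hrkT heq
end

section
/- (Key permutation lemma) Let U ∈ ℝ^{N×r} and suppose there are two index lists S and S̃ of length K and row-stochastic nonnegative matrices A, B ∈ ℝ^{K×K} such that U_{S̃,:} = A U_{S,:} and U_{S,:} = B U_{S̃,:}, where the K rows of U_{S,:} are affinely independent (no row is a convex combination of the others). Then A and B are permutation matrices and U_{S̃,:} = P U_{S,:} for a permutation matrix P. -/
/-!
`C = BA` is row-stochastic and fixes the rows of `U_{S,:}`, so each row of `U_{S,:}` is a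
convex combination of all of them; since it is not in the hull of the others, the combination
is trivial and `BA = 1`. A nonnegative row-stochastic matrix with a nonnegative left inverse
is a permutation matrix: if `A k l > 0` then `AB = 1` forces row `l` of `B` to be supported
at `k`, and then `BA = 1` forces row `k` of `A` to be supported at `l`.
-/

open Matrix BigOperators Finset

lemma Pi.eq_single_sum_of_forall_ne_eq_zero {ι M : Type*} [Fintype ι] [DecidableEq ι]
    [AddCommMonoid M] {w : ι → M} {i : ι} (hw0 : ∀ j ≠ i, w j = 0) :
    w = Pi.single i (∑ j, w j) := by
  rw [Finset.sum_eq_single i (fun j _ hj => hw0 j hj) (by simp)]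
  ext j
  by_cases hj : j = i
  · subst hj; simp
  · simp [hw0 j hj, hj]

section

variable {R : Type*} [Field R] [LinearOrder R] [IsStrictOrderedRing R]

lemma eq_single_of_sum_smul_eq_of_notMem_convexHull {ι E : Type*} [Fintype ι]
    [DecidableEq ι] [AddCommGroup E] [Module R E] {v : ι → E} {i : ι}
    (hv : v i ∉ convexHull R (Set.range fun j : {j // j ≠ i} => v j))
    {w : ι → R} (hw0 : ∀ j, 0 ≤ w j) (hw1 : ∑ j, w j = 1)
    (hwv : ∑ j, w j • v j = v i) :
    w = Pi.single i 1 := by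
  have hsum : w i + ∑ j ∈ univ.erase i, w j = 1 := by
    rw [add_sum_erase _ _ (mem_univ i), hw1]
  have hsumv : ∑ j ∈ univ.erase i, w j • v j = (∑ j ∈ univ.erase i, w j) • v i := by
    rw [eq_sub_of_add_eq' hsum, sub_smul, one_smul]
    exact eq_sub_of_add_eq' ((add_sum_erase _ _ (mem_univ i)).trans hwv)
  have hrest : ∑ j ∈ univ.erase i, w j = 0 := by
    by_contra hne
    have hpos : 0 < ∑ j ∈ univ.erase i, w j :=
      lt_of_le_of_ne (sum_nonneg fun j _ => hw0 j) (Ne.symm hne)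
    refine hv ?_
    have hcm : (univ.erase i).centerMass w v = v i := by
      rw [centerMass, hsumv, smul_smul, inv_mul_cancel₀ hpos.ne', one_smul]
    rw [← hcm]
    exact centerMass_mem_convexHull _ (fun j _ => hw0 j) hpos
      fun j hj => ⟨⟨j, ne_of_mem_erase hj⟩, rfl⟩
  rw [← hw1]
  exact Pi.eq_single_sum_of_forall_ne_eq_zero fun j hj =>
    (sum_eq_zero_iff_of_nonneg (fun j _ => hw0 j)).1 hrest j (mem_erase.2 ⟨hj, mem_univ j⟩)

variable {m n : Type*} [Fintype n] [DecidableEq n]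

lemma Matrix.eq_one_of_mul_eq_self_of_notMem_convexHull {C : Matrix n n R}
    (hC : C ∈ rowStochastic R n) {M : Matrix n m R}
    (hM : ∀ i, M i ∉ convexHull R (Set.range fun j : {j // j ≠ i} => M j)) (hCM : C * M = M) :
    C = 1 := by
  ext i j
  rw [one_eq_pi_single]
  refine congrFun (eq_single_of_sum_smul_eq_of_notMem_convexHull (hM i)
    (fun j => nonneg_of_mem_rowStochastic hC) (sum_row_of_mem_rowStochastic hC i) ?_) j
  rw [← vecMul_eq_sum, ← mul_apply_eq_vecMul, hCM]

lemma Matrix.exists_row_eq_single_of_mul_eq_one_s10 {A B : Matrix n n R}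
    (hA : A ∈ rowStochastic R n) (hB : ∀ i j, 0 ≤ B i j) (hBA : B * A = 1) (k : n) :
    ∃ l, A k = Pi.single l 1 := by
  obtain ⟨l, -, hl⟩ : ∃ l ∈ univ, (0 : R) < A k l :=
    exists_lt_of_sum_lt (by simp [sum_row_of_mem_rowStochastic hA k])
  have hBl : ∀ j ≠ k, B l j = 0 := fun j hj => by
    have hABkj : ∑ i, A k i * B i j = 0 := by
      rw [← mul_apply, mul_eq_one_comm.1 hBA, one_apply_ne (Ne.symm hj)]
    have := (sum_eq_zero_iff_of_nonneg fun i _ =>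
      mul_nonneg (nonneg_of_mem_rowStochastic hA) (hB i j)).1 hABkj l (mem_univ l)
    exact (mul_eq_zero.1 this).resolve_left hl.ne'
  have hrow : ∀ j, B l k * A k j = (1 : Matrix n n R) l j := fun j => by
    rw [← hBA, mul_apply, sum_eq_single k (fun i _ hi => by rw [hBl i hi, zero_mul]) (by simp)]
  have hBlk : B l k ≠ 0 := left_ne_zero_of_mul (by rw [hrow l, one_apply_eq]; exact one_ne_zero)
  refine ⟨l, sum_row_of_mem_rowStochastic hA k ▸
    Pi.eq_single_sum_of_forall_ne_eq_zero fun j hj => ?_⟩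
  have := hrow j
  rw [one_apply_ne (Ne.symm hj)] at this
  exact (mul_eq_zero.1 this).resolve_left hBlk

lemma Matrix.exists_eq_permMatrix_of_mul_eq_one {A B : Matrix n n R}
    (hA : A ∈ rowStochastic R n) (hB : ∀ i j, 0 ≤ B i j) (hBA : B * A = 1) :
    ∃ σ : Equiv.Perm n, A = σ.permMatrix R := by
  choose f hf using exists_row_eq_single_of_mul_eq_one_s10 hA hB hBA
  have hinj : Function.Injective f := fun k k' hkk' => by
    have hrows : (A * B) k = (A * B) k' := by
      rw [mul_apply_eq_vecMul, mul_apply_eq_vecMul, hf, hf, hkk']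
    have := congrFun hrows k
    rw [mul_eq_one_comm.1 hBA, one_apply_eq, one_apply] at this
    by_contra hne
    exact one_ne_zero (this.trans (if_neg (Ne.symm hne)))
  refine ⟨Equiv.ofBijective f (Finite.injective_iff_bijective.1 hinj), ?_⟩
  ext k j
  simp [hf k, PEquiv.toMatrix_apply, Pi.single_apply, eq_comm]

end

lemma Matrix.eq_permMatrix_inv_of_mul_eq_one {R n : Type*} [Fintype n] [DecidableEq n]
    [CommRing R] {B : Matrix n n R} {σ : Equiv.Perm n} (h : B * σ.permMatrix R = 1) :
    B = σ⁻¹.permMatrix R := by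
  have hσ : σ.permMatrix R * σ⁻¹.permMatrix R = 1 := by
    rw [← permMatrix_mul, inv_mul_cancel, permMatrix_one]
  rw [← Matrix.one_mul (σ⁻¹.permMatrix R), ← h, Matrix.mul_assoc, hσ, Matrix.mul_one]

lemma Equiv.Perm.permMatrix_eq_of {R n : Type*} [DecidableEq n] [Zero R] [One R]
    (σ : Equiv.Perm n) : σ.permMatrix R = Matrix.of fun i j => if j = σ i then 1 else 0 := by
  ext i j
  simp [PEquiv.toMatrix_apply, eq_comm]

/-- Key permutation lemma. Suppose `U_{S̃,:} = A U_{S,:}` and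
`U_{S,:} = B U_{S̃,:}` for row-stochastic nonnegative `A, B`, and no row of `U_{S,:}` is a
convex combination of the other rows. Then `A` and `B` are permutation matrices and
`U_{S̃,:} = P U_{S,:}` for a permutation matrix `P`, i.e. the rows of `U_{S̃,:}` are a
permutation of the rows of `U_{S,:}`. -/
theorem stmt10 {N r K : ℕ}
    (U : Matrix (Fin N) (Fin r) ℝ)
    (S S' : Fin K → Fin N)
    (A B : Matrix (Fin K) (Fin K) ℝ)
    (hAnn : ∀ i k, 0 ≤ A i k) (hArow : ∀ i, ∑ k, A i k = 1)
    (hBnn : ∀ i k, 0 ≤ B i k) (hBrow : ∀ i, ∑ k, B i k = 1)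
    (h1 : U.submatrix S' id = A * U.submatrix S id)
    (h2 : U.submatrix S id = B * U.submatrix S' id)
    (hext : ∀ k : Fin K,
      U (S k) ∉ convexHull ℝ (Set.range fun k' : {k' : Fin K // k' ≠ k} => U (S k'.1))) :
    ∃ σ : Equiv.Perm (Fin K),
      A = Matrix.of (fun i j => if j = σ i then (1 : ℝ) else 0) ∧
      B = Matrix.of (fun i j => if j = σ.symm i then (1 : ℝ) else 0) ∧
      (∀ k, U (S' k) = U (S (σ k))) := by
  have hA : A ∈ rowStochastic ℝ (Fin K) := mem_rowStochastic_iff_sum.2 ⟨hAnn, hArow⟩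
  have hB : B ∈ rowStochastic ℝ (Fin K) := mem_rowStochastic_iff_sum.2 ⟨hBnn, hBrow⟩
  have hBA : B * A = 1 := eq_one_of_mul_eq_self_of_notMem_convexHull (mul_mem hB hA) hext
    (by rw [Matrix.mul_assoc, ← h1, ← h2])
  obtain ⟨σ, rfl⟩ := exists_eq_permMatrix_of_mul_eq_one hA hBnn hBA
  refine ⟨σ, σ.permMatrix_eq_of, ?_, fun k => ?_⟩
  · rw [eq_permMatrix_inv_of_mul_eq_one hBA, σ⁻¹.permMatrix_eq_of]
    rfl
  · rw [PEquiv.toMatrix_toPEquiv_mul] at h1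
    exact congrFun h1 k
end

section
/- (Non-identifiability with a completely mixed subject) Let U_{1:K,:} = [I_r; W₁ᵀ] U_{1:r,:} for some W₁ ∈ ℝ^{r×(K−r)} with r < K, and suppose there exists a nonzero β ∈ ℝ^{K−r} with βᵀ(1_{K−r} − W₁ᵀ 1_r) = 0. If Π is row-stochastic with a row π_m having all entries strictly positive, then for sufficiently small ε > 0 the matrix Π̃ obtained from Π by replacing row m with π_mᵀ + ε βᵀ[−W₁ᵀ, I_{K−r}] is row-stochastic with entries in (0,1) in that row, satisfies Π̃ ≠ Π, and Π̃ U_{1:K,:} = Π U_{1:K,:}. -/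
/-!
The direction `d = βᵀ[-W₁ᵀ, I]` has coordinate sum `βᵀ(1 - W₁ᵀ1) = 0`, and `dᵀU = 0`
because the last `K - r` rows of `U` are `W₁ᵀ` times the first `r`. Moving row `m` along `d`
therefore keeps all row sums and the product with `U`. Row `m` is strictly positive, so it
stays so for small `ε`; its entries are then `< 1` since a nonzero zero-sum `d` forces at
least two columns.
-/

open Matrix BigOperators Filter Topology

section Simplex

variable {ι : Type*} [Fintype ι]

lemma Fintype.nontrivial_of_sum_eq_zero {d : ι → ℝ} (hd : ∑ k, d k = 0) {k₀ : ι}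
    (hk₀ : d k₀ ≠ 0) : Nontrivial ι := by
  by_contra h
  have : Subsingleton ι := not_nontrivial_iff_subsingleton.1 h
  exact hk₀ (by rwa [Fintype.sum_subsingleton d k₀] at hd)

lemma lt_one_of_pos_of_sum_eq_one [Nontrivial ι] {p : ι → ℝ} (hp : ∀ k, 0 < p k)
    (hsum : ∑ k, p k = 1) (k : ι) : p k < 1 := by
  obtain ⟨k', hk'⟩ := exists_ne k
  rw [← hsum]
  exact Finset.single_lt_sum hk' (Finset.mem_univ _) (Finset.mem_univ _) (hp k')
    fun j _ _ => (hp j).le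

lemma eventually_pos_add_smul {p : ι → ℝ} (hp : ∀ k, 0 < p k) (d : ι → ℝ) :
    ∀ᶠ ε in 𝓝 (0 : ℝ), ∀ k, 0 < p k + ε * d k :=
  eventually_all.2 fun k =>
    ((continuous_const.add (continuous_id.mul continuous_const)).tendsto 0).eventually
      (lt_mem_nhds (by simpa using hp k))

end Simplex

section RowPerturbation

variable {l n o : Type*} [DecidableEq l]

lemma updateRow_add_smul_mul [Fintype n] (P : Matrix l n ℝ) (m : l) (ε : ℝ) {d : n → ℝ}
    (U : Matrix n o ℝ) (hd : d ᵥ* U = 0) :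
    P.updateRow m (P m + ε • d) * U = P * U := by
  rw [updateRow_mul, add_vecMul, smul_vecMul, hd, smul_zero, add_zero, ← mul_apply_eq_vecMul,
    updateRow_eq_self]

lemma sum_updateRow_add_smul [Fintype n] {P : Matrix l n ℝ} (hP : ∀ i, ∑ k, P i k = 1) (m : l)
    (ε : ℝ) {d : n → ℝ} (hd : ∑ k, d k = 0) (i : l) :
    ∑ k, P.updateRow m (P m + ε • d) i k = 1 := by
  obtain rfl | hi := eq_or_ne i m
  · simp only [updateRow_self, Pi.add_apply, Pi.smul_apply, smul_eq_mul, Finset.sum_add_distrib,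
      ← Finset.mul_sum, hP, hd, mul_zero, add_zero]
  · rw [updateRow_ne hi, hP]

lemma updateRow_add_smul_ne (P : Matrix l n ℝ) (m : l) {ε : ℝ} (hε : ε ≠ 0) {d : n → ℝ}
    (hd : d ≠ 0) : P.updateRow m (P m + ε • d) ≠ P := fun h => by
  have := congrFun h m
  rw [updateRow_self, add_eq_left] at this
  exact smul_ne_zero hε hd this

end RowPerturbation

section Direction

variable {r s : ℕ} (W : Matrix (Fin r) (Fin s) ℝ) (β : Fin s → ℝ)

def perturbationDirection : Fin r ⊕ Fin s → ℝ :=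
  Sum.elim (fun i => -(∑ j, β j * W i j)) β

lemma perturbationDirection_ne_zero (hβ : β ≠ 0) : perturbationDirection W β ≠ 0 :=
  fun h => hβ (funext fun j => congrFun h (Sum.inr j))

lemma sum_perturbationDirection (hβW : ∑ j, β j * (1 - ∑ i, W i j) = 0) :
    ∑ k, perturbationDirection W β k = 0 := by
  simp only [perturbationDirection, Fintype.sum_sum_type, Sum.elim_inl, Sum.elim_inr,
    Finset.sum_neg_distrib]
  simp only [mul_sub, mul_one, Finset.sum_sub_distrib, Finset.mul_sum] at hβW
  rw [Finset.sum_comm] at hβW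
  linarith

lemma perturbationDirection_vecMul {r' : ℕ} {U : Matrix (Fin r ⊕ Fin s) (Fin r') ℝ}
    (hU : ∀ j c, U (Sum.inr j) c = ∑ i, W i j * U (Sum.inl i) c) :
    perturbationDirection W β ᵥ* U = 0 := by
  ext c
  simp only [vecMul, dotProduct, perturbationDirection, Fintype.sum_sum_type, Sum.elim_inl,
    Sum.elim_inr, hU, neg_mul, Finset.sum_neg_distrib, Finset.sum_mul, Finset.mul_sum,
    Pi.zero_apply]
  rw [Finset.sum_comm]
  simp only [mul_assoc, neg_add_cancel]

end Direction

theorem stmt12_general {N r s r' : ℕ}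
    (Pmat : Matrix (Fin N) (Fin r ⊕ Fin s) ℝ)
    (hProw : ∀ i, ∑ k, Pmat i k = 1)
    (U : Matrix (Fin r ⊕ Fin s) (Fin r') ℝ)
    (W : Matrix (Fin r) (Fin s) ℝ)
    (hU : ∀ (j : Fin s) (c : Fin r'), U (Sum.inr j) c = ∑ i, W i j * U (Sum.inl i) c)
    (β : Fin s → ℝ) (hβ : β ≠ 0)
    (hβW : ∑ j, β j * (1 - ∑ i, W i j) = 0)
    (m : Fin N) (hm : ∀ k, 0 < Pmat m k) :
    ∃ ε₀ > (0 : ℝ), ∀ ε : ℝ, 0 < ε → ε < ε₀ →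
      let d : Fin r ⊕ Fin s → ℝ := Sum.elim (fun i => -(∑ j, β j * W i j)) β
      let P' : Matrix (Fin N) (Fin r ⊕ Fin s) ℝ :=
        Pmat.updateRow m (fun k => Pmat m k + ε * d k)
      (∀ k, P' m k ∈ Set.Ioo (0 : ℝ) 1) ∧
      (∀ i, ∑ k, P' i k = 1) ∧
      P' ≠ Pmat ∧
      P' * U = Pmat * U := by
  set d := perturbationDirection W β
  have hd_ne : d ≠ 0 := perturbationDirection_ne_zero W β hβ
  have hd_sum : ∑ k, d k = 0 := sum_perturbationDirection W β hβW
  obtain ⟨k₀, hk₀⟩ := Function.ne_iff.1 hd_ne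
  have : Nontrivial (Fin r ⊕ Fin s) := Fintype.nontrivial_of_sum_eq_zero hd_sum hk₀
  obtain ⟨ε₀, hε₀, hpos⟩ := Metric.eventually_nhds_iff.1 (eventually_pos_add_smul hm d)
  refine ⟨ε₀, hε₀, fun ε hε hεε₀ => ?_⟩
  have hrow_pos : ∀ k, 0 < Pmat m k + ε * d k :=
    hpos (by rwa [Real.dist_0_eq_abs, abs_of_pos hε])
  have hsum : ∀ i, ∑ k, Pmat.updateRow m (Pmat m + ε • d) i k = 1 :=
    sum_updateRow_add_smul hProw m ε hd_sum
  refine ⟨fun k => ?_, hsum, updateRow_add_smul_ne Pmat m hε.ne' hd_ne,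
    updateRow_add_smul_mul Pmat m ε U (perturbationDirection_vecMul W β hU)⟩
  rw [updateRow_self]
  refine ⟨hrow_pos k, lt_one_of_pos_of_sum_eq_one hrow_pos ?_ k⟩
  simpa only [updateRow_self, Pi.add_apply, Pi.smul_apply, smul_eq_mul] using hsum m

/-- non-identifiability with a completely mixed subject.
Columns of `Pmat` are indexed by `Fin r ⊕ Fin s` (`K = r + s`, `s = K − r ≥ 1`).
Suppose the bottom block of `U` satisfies `U_{r+j,:} = (W₁ᵀ U_{1:r,:})_{j,:}`, i.e.
`U (inr j) = ∑ i, W i j • U (inl i)`, and `β ≠ 0` satisfies `βᵀ(1_{K−r} − W₁ᵀ1_r) = 0`.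
If row `m` of the row-stochastic matrix `Pmat` has all entries strictly positive,
then for all small enough `ε > 0` the matrix obtained by replacing row `m` of `Pmat` with
`π_m + ε βᵀ[−W₁ᵀ, I_{K−r}]` is row-stochastic with entries of row `m` in `(0,1)`,
differs from `Pmat`, and yields the same product with `U`. -/
theorem stmt12 {N r s r' : ℕ} (hs : 0 < s)
    (Pmat : Matrix (Fin N) (Fin r ⊕ Fin s) ℝ)
    (hPnn : ∀ i k, 0 ≤ Pmat i k) (hProw : ∀ i, ∑ k, Pmat i k = 1)
    (U : Matrix (Fin r ⊕ Fin s) (Fin r') ℝ)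
    (W : Matrix (Fin r) (Fin s) ℝ)
    (hU : ∀ (j : Fin s) (c : Fin r'), U (Sum.inr j) c = ∑ i, W i j * U (Sum.inl i) c)
    (β : Fin s → ℝ) (hβ : β ≠ 0)
    (hβW : ∑ j, β j * (1 - ∑ i, W i j) = 0)
    (m : Fin N) (hm : ∀ k, 0 < Pmat m k) :
    ∃ ε₀ > (0 : ℝ), ∀ ε : ℝ, 0 < ε → ε < ε₀ →
      let d : Fin r ⊕ Fin s → ℝ := Sum.elim (fun i => -(∑ j, β j * W i j)) β
      let P' : Matrix (Fin N) (Fin r ⊕ Fin s) ℝ :=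
        Pmat.updateRow m (fun k => Pmat m k + ε * d k)
      (∀ k, P' m k ∈ Set.Ioo (0 : ℝ) 1) ∧
      (∀ i, ∑ k, P' i k = 1) ∧
      P' ≠ Pmat ∧
      P' * U = Pmat * U :=
  stmt12_general Pmat hProw U W hU β hβ hβW m hm
end

section
/- Let U = Π U_{S,:} with UᵀU = I_K, Π_{S,:} = I_K, and rank(Π) = K. Then the maximum row norm of U satisfies ‖U‖_{2,∞} ≤ ‖U_{S,:}‖ = 1/σ_K(Π), where σ_K(Π) is the smallest singular value of Π. -/
/-!
Write `M = U_S`. Since `U = Π M` has orthonormal columns, `Π ∘ M` is an isometry, so `M` is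
invertible and `‖Π x‖ = ‖M⁻¹ x‖`; the smallest singular value of `Π` is therefore
`min_{‖x‖=1} ‖M⁻¹ x‖ = 1 / ‖M‖`. Row `i` of `U` is `Mᵀ πᵢ`, where the row `πᵢ` of `Π` lies in the
standard simplex and so has Euclidean norm at most `1`; hence it has norm at most `‖Mᵀ‖ = ‖M‖`.
-/

open Matrix BigOperators

/-- The `k`-th largest singular value of a real matrix, via the Courant–Fischer
max–min characterization. -/
noncomputable def singVal {m n : ℕ} (A : Matrix (Fin m) (Fin n) ℝ) (k : ℕ) : ℝ :=
  ⨆ V : {V : Submodule ℝ (EuclideanSpace ℝ (Fin n)) // Module.finrank ℝ V = k},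
    ⨅ x : {x : EuclideanSpace ℝ (Fin n) // x ∈ V.1 ∧ ‖x‖ = 1},
      ‖Matrix.toEuclideanLin A x.1‖

open scoped Matrix.Norms.L2Operator
open WithLp (toLp)

section MaxMin

variable {E F : Type*} [NormedAddCommGroup E] [NormedSpace ℝ E] [NormedAddCommGroup F]
  [NormedSpace ℝ F]

/-- `singVal A k` is definitionally `maxMinNorm (toEuclideanLin A) k`. -/
noncomputable def maxMinNorm (f : E →ₗ[ℝ] F) (k : ℕ) : ℝ :=
  ⨆ V : {V : Submodule ℝ E // Module.finrank ℝ V = k},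
    ⨅ z : {z : E // z ∈ V.1 ∧ ‖z‖ = 1}, ‖f z‖

theorem iInf_norm_apply_unit_mem_le_opNorm (f : E →L[ℝ] F) (V : Submodule ℝ E) :
    ⨅ z : {z : E // z ∈ V ∧ ‖z‖ = 1}, ‖f z‖ ≤ ‖f‖ := by
  rcases isEmpty_or_nonempty {z : E // z ∈ V ∧ ‖z‖ = 1} with h | h
  · rw [Real.iInf_of_isEmpty]
    exact norm_nonneg f
  · obtain ⟨z⟩ := h
    exact ciInf_le_of_le ⟨0, by rintro _ ⟨x, rfl⟩; positivity⟩ z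
      (by simpa [z.2.2] using f.le_opNorm z)

theorem iInf_norm_apply_unit_mem_span_singleton {𝓕 : Type*} [FunLike 𝓕 E F]
    [LinearMapClass 𝓕 ℝ E F] (f : 𝓕) {x : E} (hx : ‖x‖ = 1) :
    ⨅ z : {z : E // z ∈ ℝ ∙ x ∧ ‖z‖ = 1}, ‖f z‖ = ‖f x‖ := by
  have : Nonempty {z : E // z ∈ ℝ ∙ x ∧ ‖z‖ = 1} :=
    ⟨⟨x, Submodule.mem_span_singleton_self x, hx⟩⟩
  refine (iInf_congr fun ⟨z, hz, hz1⟩ => ?_).trans ciInf_const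
  obtain ⟨c, rfl⟩ := Submodule.mem_span_singleton.mp hz
  rw [norm_smul, hx, mul_one] at hz1
  rw [map_smul, norm_smul, hz1, one_mul]

theorem maxMinNorm_one_eq_opNorm (f : E →L[ℝ] F) : maxMinNorm (f : E →ₗ[ℝ] F) 1 = ‖f‖ := by
  have hbdd : BddAbove (Set.range fun V : {V : Submodule ℝ E // Module.finrank ℝ V = 1} =>
      ⨅ z : {z : E // z ∈ V.1 ∧ ‖z‖ = 1}, ‖f z‖) :=
    ⟨‖f‖, by rintro _ ⟨V, rfl⟩; exact iInf_norm_apply_unit_mem_le_opNorm f V.1⟩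
  refine le_antisymm (Real.iSup_le (fun V => iInf_norm_apply_unit_mem_le_opNorm f V.1)
    (norm_nonneg f)) (f.opNorm_le_of_unit_norm ?_ fun x hx => ?_)
  · exact Real.iSup_nonneg fun V => Real.iInf_nonneg fun z => norm_nonneg _
  · have hx0 : x ≠ 0 := norm_ne_zero_iff.mp (by rw [hx]; exact one_ne_zero)
    have := le_ciSup hbdd ⟨ℝ ∙ x, finrank_span_singleton hx0⟩
    rwa [iInf_norm_apply_unit_mem_span_singleton f hx] at this

theorem maxMinNorm_finrank_eq_iInf_sphere [FiniteDimensional ℝ E] {k : ℕ}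
    (hk : Module.finrank ℝ E = k) (f : E →ₗ[ℝ] F) :
    maxMinNorm f k = ⨅ x : Metric.sphere (0 : E) 1, ‖f x‖ := by
  let : Unique {V : Submodule ℝ E // Module.finrank ℝ V = k} :=
    { default := ⟨⊤, by rw [finrank_top, hk]⟩
      uniq := fun V => Subtype.ext (Submodule.eq_top_of_finrank_eq (V.2.trans hk.symm)) }
  rw [maxMinNorm, ciSup_unique]
  show ⨅ z : {z : E // z ∈ (⊤ : Submodule ℝ E) ∧ ‖z‖ = 1}, ‖f z‖ = _
  exact Equiv.iInf_congr (Equiv.subtypeEquivRight fun z => by simp) fun z => rfl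

theorem iInf_sphere_norm_eq_inv_opNorm [FiniteDimensional ℝ E] (f : E →ₗ[ℝ] F) (g : E →L[ℝ] E)
    (hfg : ∀ y, ‖f (g y)‖ = ‖y‖) :
    ⨅ x : Metric.sphere (0 : E) 1, ‖f x‖ = ‖g‖⁻¹ := by
  rcases subsingleton_or_nontrivial E with hE | hE
  · simp [Subsingleton.elim g 0]
  have hg : Function.Surjective g := by
    refine LinearMap.injective_iff_surjective.mp fun y z hyz => ?_
    have := hfg (y - z)
    rwa [map_sub, show g y = g z from hyz, sub_self, map_zero, norm_zero, eq_comm, norm_eq_zero,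
      sub_eq_zero] at this
  have hlower (x : E) (hx : ‖x‖ = 1) : 1 ≤ ‖g‖ * ‖f x‖ := by
    obtain ⟨y, rfl⟩ := hg x
    simpa only [hx, hfg] using g.le_opNorm y
  obtain ⟨x₀, hx₀⟩ := (NormedSpace.sphere_nonempty (E := E)).mpr zero_le_one
  have hg0 : 0 < ‖g‖ := by
    have := hlower x₀ (mem_sphere_zero_iff_norm.mp hx₀)
    exact (norm_nonneg g).lt_of_ne fun h => by rw [← h, zero_mul] at this; linarith
  have : Nonempty (Metric.sphere (0 : E) 1) := ⟨⟨x₀, hx₀⟩⟩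
  refine le_antisymm ?_ (le_ciInf fun x => (inv_le_iff_one_le_mul₀' hg0).mpr
    (hlower x (mem_sphere_zero_iff_norm.mp x.2)))
  -- witness: `g y / ‖g y‖` for some `y` in the unit ball with `‖g y‖` close to `‖g‖`
  by_contra! hlt
  set c := ⨅ x : Metric.sphere (0 : E) 1, ‖f x‖
  obtain ⟨y, hy, hgy⟩ := g.exists_lt_apply_of_lt_opNorm (inv_lt_of_inv_lt₀ hg0 hlt)
  have hc : 0 < c := (inv_pos.mpr hg0).trans hlt
  have hgy0 : 0 < ‖g y‖ := (inv_pos.mpr hc).trans hgy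
  have hx : ‖g y‖⁻¹ • g y ∈ Metric.sphere (0 : E) 1 := by
    rw [mem_sphere_zero_iff_norm, norm_smul, norm_inv, norm_norm, inv_mul_cancel₀ hgy0.ne']
  have hcle : c ≤ ‖f (‖g y‖⁻¹ • g y)‖ :=
    ciInf_le (f := fun x : Metric.sphere (0 : E) 1 => ‖f x‖)
      ⟨0, by rintro _ ⟨x, rfl⟩; positivity⟩ ⟨_, hx⟩
  rw [map_smul, norm_smul, norm_inv, norm_norm, hfg] at hcle
  have hinv : ‖g y‖⁻¹ < c := (inv_lt_comm₀ hc hgy0).mp hgy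
  nlinarith [inv_pos.mpr hgy0]

end MaxMin

theorem Matrix.norm_toEuclideanLin_of_conjTranspose_mul_self {𝕜 m n : Type*} [RCLike 𝕜]
    [Fintype m] [Fintype n] [DecidableEq m] [DecidableEq n] {U : Matrix m n 𝕜} (hU : Uᴴ * U = 1)
    (y : EuclideanSpace 𝕜 n) : ‖toEuclideanLin U y‖ = ‖y‖ := by
  refine (LinearMap.norm_map_iff_inner_map_map (toEuclideanLin U)).mpr (fun x z => ?_) y
  rw [← LinearMap.adjoint_inner_left, ← toEuclideanLin_conjTranspose_eq_adjoint,
    ← LinearMap.comp_apply, ← toLpLin_mul_same, hU, toLpLin_one, LinearMap.id_apply]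

theorem Matrix.l2_opNorm_vecMul {m n : Type*} [Fintype m] [Fintype n] [DecidableEq m]
    [DecidableEq n] (M : Matrix m n ℝ) (p : m → ℝ) : ‖toLp 2 (p ᵥ* M)‖ ≤ ‖M‖ * ‖toLp 2 p‖ := by
  have := Mᵀ.l2_opNorm_mulVec (toLp 2 p)
  rwa [← conjTranspose_eq_transpose_of_trivial, l2_opNorm_conjTranspose,
    conjTranspose_eq_transpose_of_trivial, mulVec_transpose] at this

theorem norm_toLp_two_le_one_of_mem_stdSimplex {ι : Type*} [Fintype ι] {p : ι → ℝ}
    (hp : p ∈ stdSimplex ℝ ι) : ‖toLp 2 p‖ ≤ 1 := by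
  have hle (i : ι) : p i ≤ 1 :=
    hp.2 ▸ Finset.single_le_sum (fun j _ => hp.1 j) (Finset.mem_univ i)
  rw [EuclideanSpace.norm_eq, Real.sqrt_le_one]
  calc ∑ i, ‖p i‖ ^ 2 ≤ ∑ i, p i := Finset.sum_le_sum fun i _ => by
        rw [Real.norm_eq_abs, sq_abs, sq]
        exact mul_le_of_le_one_left (hp.1 i) (hle i)
    _ = 1 := hp.2

theorem singVal_one_eq_l2_opNorm {m n : ℕ} (A : Matrix (Fin m) (Fin n) ℝ) :
    singVal A 1 = ‖A‖ :=
  maxMinNorm_one_eq_opNorm (LinearMap.toContinuousLinearMap (toEuclideanLin A))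

theorem singVal_ncols_eq_iInf_sphere {m n : ℕ} (A : Matrix (Fin m) (Fin n) ℝ) :
    singVal A n = ⨅ x : Metric.sphere (0 : EuclideanSpace ℝ (Fin n)) 1, ‖toEuclideanLin A x‖ :=
  maxMinNorm_finrank_eq_iInf_sphere finrank_euclideanSpace_fin (toEuclideanLin A)

theorem stmt18_general {N K : ℕ}
    (Pmat U : Matrix (Fin N) (Fin K) ℝ)
    (hPnn : ∀ i k, 0 ≤ Pmat i k) (hProw : ∀ i, ∑ k, Pmat i k = 1)
    (S : Fin K → Fin N)
    (hUo : Uᵀ * U = 1)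
    (hU : U = Pmat * U.submatrix S id) :
    (∀ i, Real.sqrt (∑ k, (U i k) ^ 2) ≤ singVal (U.submatrix S id) 1) ∧
      singVal (U.submatrix S id) 1 = 1 / singVal Pmat K := by
  set M := U.submatrix S id
  have hiso (y : EuclideanSpace ℝ (Fin K)) : ‖toEuclideanLin Pmat (toEuclideanLin M y)‖ = ‖y‖ := by
    rw [← LinearMap.comp_apply, ← toLpLin_mul_same, ← hU]
    exact norm_toEuclideanLin_of_conjTranspose_mul_self
      (by rwa [conjTranspose_eq_transpose_of_trivial]) y
  have hM : singVal M 1 = ‖M‖ := singVal_one_eq_l2_opNorm M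
  have hP : singVal Pmat K = ‖M‖⁻¹ := by
    rw [singVal_ncols_eq_iInf_sphere]
    exact iInf_sphere_norm_eq_inv_opNorm _ (LinearMap.toContinuousLinearMap (toEuclideanLin M)) hiso
  refine ⟨fun i => ?_, by rw [hM, hP, one_div, inv_inv]⟩
  calc √(∑ k, U i k ^ 2) = ‖toLp 2 (Pmat i ᵥ* M)‖ := by
        rw [EuclideanSpace.norm_eq, hU]
        simp only [Real.norm_eq_abs, sq_abs]
        rfl
    _ ≤ ‖M‖ * ‖toLp 2 (Pmat i)‖ := l2_opNorm_vecMul M (Pmat i)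
    _ ≤ ‖M‖ := mul_le_of_le_one_right (norm_nonneg M)
        (norm_toLp_two_le_one_of_mem_stdSimplex ⟨hPnn i, hProw i⟩)
    _ = singVal M 1 := hM.symm

/-- If `U = Pmat * U_S` with `UᵀU = I_K`, `Pmat` row-stochastic with
`Pmat.submatrix S id = I_K` and `rank Pmat = K`, then the maximum row norm of `U` satisfies
`‖U‖_{2,∞} ≤ ‖U_S‖ = 1/σ_K(Pmat)`, where `‖U_S‖ = σ₁(U_S)` is the operator norm and
`σ_K(Pmat)` the smallest (K-th) singular value of `Pmat`. -/
theorem stmt18 {N K : ℕ}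
    (Pmat U : Matrix (Fin N) (Fin K) ℝ)
    (hPnn : ∀ i k, 0 ≤ Pmat i k) (hProw : ∀ i, ∑ k, Pmat i k = 1)
    (S : Fin K → Fin N) (hS : Pmat.submatrix S id = 1)
    (hrkP : Pmat.rank = K)
    (hUo : Uᵀ * U = 1)
    (hU : U = Pmat * U.submatrix S id) :
    (∀ i, Real.sqrt (∑ k, (U i k) ^ 2) ≤ singVal (U.submatrix S id) 1) ∧
      singVal (U.submatrix S id) 1 = 1 / singVal Pmat K :=
  stmt18_general Pmat U hPnn hProw S hUo hU
end
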